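/- Let S, T, U be real numbers with |S| < 1, S² + T² ≠ 0, and set Q = T² - S² - 2S²T². If 4(1-S²)T²/(S²+T²) ≥ 2, 4(ST+U)²/(1-S²+T²+2STU+U²) ≥ 2, and 4(-1+STU)²/(1-2STU+U²-S²U²+T²U²) ≥ 2 (all denominators positive), then Q = 0 and U² + 2STU = 1; i.e., S² = T²/(1+2T²) and U² + 2STU = 1. -/

import Mathlib

/-! With `Q = T² - S² - 2S²T²`, clearing denominators turns the three inequalities into
`Q ≥ 0`, `U² + 2STU ≥ 1 + Q` and `1 - 2STU ≥ U²(1 + Q)`. Adding the last two gives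
`Q (1 + U²) ≤ 0`, so `Q = 0`, and then both of them are equalities. Each quotient exceeds `2`
only if its denominator is positive, since its numerator or its denominator is nonnegative. -/

section LinearOrderedField

variable {K : Type*} [Field K] [LinearOrder K] [IsStrictOrderedRing K] {a b c : K}

lemma mul_le_of_le_div_of_num_nonneg (ha : 0 ≤ a) (hc : 0 < c) (h : c ≤ a / b) : c * b ≤ a := by
  rcases div_pos_iff.mp (hc.trans_le h) with ⟨-, hb⟩ | ⟨ha', -⟩
  · exact (le_div_iff₀ hb).mp h
  · exact absurd ha' ha.not_gt

lemma mul_le_of_le_div_of_den_nonneg (hb : 0 ≤ b) (hc : 0 < c) (h : c ≤ a / b) : c * b ≤ a := by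
  rcases div_pos_iff.mp (hc.trans_le h) with ⟨-, hb'⟩ | ⟨-, hb'⟩
  · exact (le_div_iff₀ hb').mp h
  · exact absurd hb' hb.not_gt

end LinearOrderedField

theorem four_cylinders_rigid_general (S T U : ℝ)
    (h1 : 4 * (1 - S ^ 2) * T ^ 2 / (S ^ 2 + T ^ 2) ≥ 2)
    (h2 : 4 * (S * T + U) ^ 2 /
        (1 - S ^ 2 + T ^ 2 + 2 * S * T * U + U ^ 2) ≥ 2)
    (h3 : 4 * (-1 + S * T * U) ^ 2 /
        (1 - 2 * S * T * U + U ^ 2 - S ^ 2 * U ^ 2 + T ^ 2 * U ^ 2) ≥ 2) :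
    T ^ 2 - S ^ 2 - 2 * S ^ 2 * T ^ 2 = 0 ∧
    S ^ 2 = T ^ 2 / (1 + 2 * T ^ 2) ∧
    U ^ 2 + 2 * S * T * U = 1 := by
  have e1 := mul_le_of_le_div_of_den_nonneg (by positivity) two_pos h1
  have e2 := mul_le_of_le_div_of_num_nonneg (by positivity) two_pos h2
  have e3 := mul_le_of_le_div_of_num_nonneg (by positivity) two_pos h3
  set Q := T ^ 2 - S ^ 2 - 2 * S ^ 2 * T ^ 2
  have hQ_nonneg : 0 ≤ Q := by linarith
  have hU_lower : 1 + Q ≤ U ^ 2 + 2 * S * T * U := by linarith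
  have hU_upper : U ^ 2 * (1 + Q) ≤ 1 - 2 * S * T * U := by linarith
  have hQ : Q = 0 := by
    have hQU : Q * (1 + U ^ 2) ≤ 0 := by linarith
    exact le_antisymm (nonpos_of_mul_nonpos_left hQU (by positivity)) hQ_nonneg
  refine ⟨hQ, ?_, ?_⟩
  · rw [eq_div_iff (by positivity)]
    linarith
  · rw [hQ] at hU_lower hU_upper
    linarith

/-- Four-cylinder case: with `|S| < 1`, `S² + T² ≠ 0` and
`Q = T² - S² - 2S²T²`, the three distance inequalities force `Q = 0`
(equivalently `S² = T²/(1+2T²)`) and `U² + 2STU = 1`. -/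
theorem four_cylinders_rigid (S T U : ℝ) (hS : |S| < 1) (hST : S ^ 2 + T ^ 2 ≠ 0)
    (h1 : 4 * (1 - S ^ 2) * T ^ 2 / (S ^ 2 + T ^ 2) ≥ 2)
    (h2 : 4 * (S * T + U) ^ 2 /
        (1 - S ^ 2 + T ^ 2 + 2 * S * T * U + U ^ 2) ≥ 2)
    (h3 : 4 * (-1 + S * T * U) ^ 2 /
        (1 - 2 * S * T * U + U ^ 2 - S ^ 2 * U ^ 2 + T ^ 2 * U ^ 2) ≥ 2) :
    T ^ 2 - S ^ 2 - 2 * S ^ 2 * T ^ 2 = 0 ∧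
    S ^ 2 = T ^ 2 / (1 + 2 * T ^ 2) ∧
    U ^ 2 + 2 * S * T * U = 1 :=
  four_cylinders_rigid_general S T U h1 h2 h3
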